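/- arXiv:2107.05456 — 13 statements merged into one kernel-verified Lean document; each statement's English description precedes it below -/
import Mathlib

section
/- Let (X, δ) be a metric space with agents partitioned into districts N_1,…,N_k of sizes n_1,…,n_k and alternatives A. Suppose each district d has a representative y_d ∈ A with (1/n_d)Σ_{i∈N_d} δ(i, y_d) ≤ α · (1/n_d)Σ_{i∈N_d} δ(i, j) for all j ∈ A, and the final winner w equals y_{d'} for some district d'. Then for every o ∈ A, max_d (1/n_d)Σ_{i∈N_d} δ(i, w) ≤ (2 + α) · max_d (1/n_d)Σ_{i∈N_d} δ(i, o). -/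
lemma avg_dist_nonneg {X ι : Type*} [MetricSpace X] (S : Finset ι) (p : ι → X) (c : X) :
    0 ≤ (1 / (S.card : ℝ)) * ∑ i ∈ S, dist (p i) c := by
  apply mul_nonneg (by positivity)
  exact Finset.sum_nonneg fun i _ => dist_nonneg

lemma avg_dist_triangle {X ι : Type*} [MetricSpace X] {S : Finset ι} (hS : S.Nonempty)
    (p : ι → X) (w o : X) :
    (1 / (S.card : ℝ)) * ∑ i ∈ S, dist (p i) w ≤
      (1 / (S.card : ℝ)) * ∑ i ∈ S, dist (p i) o + dist o w := by
  have hn : (0:ℝ) < S.card := by exact_mod_cast hS.card_pos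
  have h1 : ∑ i ∈ S, dist (p i) w ≤ ∑ i ∈ S, (dist (p i) o + dist o w) :=
    Finset.sum_le_sum fun i _ => dist_triangle _ _ _
  rw [Finset.sum_add_distrib, Finset.sum_const, nsmul_eq_mul] at h1
  have := mul_le_mul_of_nonneg_left h1 (le_of_lt (by positivity : (0:ℝ) < 1 / S.card))
  rw [mul_add] at this
  calc (1 / (S.card : ℝ)) * ∑ i ∈ S, dist (p i) w ≤ _ := this
    _ = (1 / (S.card : ℝ)) * ∑ i ∈ S, dist (p i) o + dist o w := by
        field_simp

lemma dist_le_avg_add_avg {X ι : Type*} [MetricSpace X] {S : Finset ι} (hS : S.Nonempty)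
    (p : ι → X) (w o : X) :
    dist o w ≤ (1 / (S.card : ℝ)) * ∑ i ∈ S, dist (p i) w +
      (1 / (S.card : ℝ)) * ∑ i ∈ S, dist (p i) o := by
  have hn : (0:ℝ) < S.card := by exact_mod_cast hS.card_pos
  have h1 : ∑ i ∈ S, dist o w ≤ ∑ i ∈ S, (dist (p i) w + dist (p i) o) := by
    apply Finset.sum_le_sum
    intro i _
    calc dist o w ≤ dist o (p i) + dist (p i) w := dist_triangle _ _ _
      _ = dist (p i) w + dist (p i) o := by rw [dist_comm o (p i)]; ring
  rw [Finset.sum_const, nsmul_eq_mul, Finset.sum_add_distrib] at h1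
  have := mul_le_mul_of_nonneg_left h1 (le_of_lt (by positivity : (0:ℝ) < 1 / S.card))
  rw [mul_add] at this
  calc dist o w = (1 / (S.card : ℝ)) * ((S.card : ℝ) * dist o w) := by field_simp
    _ ≤ _ := this

/-- MAX∘AVG distortion of any α-in-arbitrary-over mechanism is at most 2+α. -/
theorem max_avg_alpha_in_arbitrary_over
    {X : Type*} [MetricSpace X] {ι : Type*}
    {κ : Type*} [Fintype κ] [Nonempty κ]
    (D : κ → Finset ι) (hD : ∀ d, (D d).Nonempty)
    (p : ι → X) (A : Finset X)
    (y : κ → X) (hyA : ∀ d, y d ∈ A) (α : ℝ)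
    (hin : ∀ d, ∀ j ∈ A,
      (1 / ((D d).card : ℝ)) * ∑ i ∈ D d, dist (p i) (y d) ≤
        α * ((1 / ((D d).card : ℝ)) * ∑ i ∈ D d, dist (p i) j))
    (w : X) (d' : κ) (hw : w = y d')
    (o : X) (ho : o ∈ A) :
    Finset.univ.sup' Finset.univ_nonempty
        (fun d => (1 / ((D d).card : ℝ)) * ∑ i ∈ D d, dist (p i) w) ≤
      (2 + α) * Finset.univ.sup' Finset.univ_nonempty
        (fun d => (1 / ((D d).card : ℝ)) * ∑ i ∈ D d, dist (p i) o) := by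
  set avg : κ → X → ℝ := fun d c => (1 / ((D d).card : ℝ)) * ∑ i ∈ D d, dist (p i) c with havg
  set M : ℝ := Finset.univ.sup' Finset.univ_nonempty (fun d => avg d o) with hM
  have hMd : ∀ d, avg d o ≤ M := fun d => Finset.le_sup' (fun d => avg d o) (Finset.mem_univ d)
  have hnn : ∀ d (c : X), 0 ≤ avg d c := fun d c => avg_dist_nonneg (D d) p c
  have hM0 : 0 ≤ M := le_trans (hnn d' o) (hMd d')
  have hwd' : avg d' w ≤ α * avg d' o := by
    have := hin d' o ho
    rw [hw]; exact this
  rcases le_or_gt 0 α with hα | hα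
  · apply Finset.sup'_le
    intro d _
    show avg d w ≤ (2 + α) * M
    have h1 : avg d w ≤ avg d o + dist o w := avg_dist_triangle (hD d) p w o
    have h2 : dist o w ≤ avg d' w + avg d' o := dist_le_avg_add_avg (hD d') p w o
    have h3 := mul_le_mul_of_nonneg_left (hMd d') hα
    have h4 := hMd d
    nlinarith [hMd d', hnn d' o]
  · -- α < 0 forces all averages to o (and to y d) to be zero
    have hzero : ∀ d, avg d o = 0 ∧ avg d (y d) = 0 := by
      intro d
      have h1' : avg d (y d) ≤ α * avg d o := hin d o ho
      have h2 := hnn d (y d)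
      have h3 := hnn d o
      have h4 : α * avg d o ≤ 0 := mul_nonpos_of_nonpos_of_nonneg hα.le h3
      have ho0 : avg d o = 0 := by
        by_contra h
        have hpos : 0 < avg d o := lt_of_le_of_ne h3 (Ne.symm h)
        have := mul_neg_of_neg_of_pos hα hpos
        linarith
      exact ⟨ho0, le_antisymm (h1'.trans h4) h2⟩
    have hMz : M = 0 := by
      apply le_antisymm _ hM0
      apply Finset.sup'_le
      intro d _
      exact le_of_eq (hzero d).1
    have hdow : dist o w ≤ 0 := by
      have h2 : dist o w ≤ avg d' w + avg d' o := dist_le_avg_add_avg (hD d') p w o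
      have := (hzero d').1
      have hw' : avg d' w = 0 := by rw [hw]; exact (hzero d').2
      linarith
    rw [hMz, mul_zero]
    apply Finset.sup'_le
    intro d _
    show avg d w ≤ 0
    have h1 : avg d w ≤ avg d o + dist o w := avg_dist_triangle (hD d) p w o
    have := (hzero d).1
    linarith
end

section
/- Let (X, δ) be a metric space with agents partitioned into districts N_1,…,N_k and alternatives A. Suppose each district d has a representative y_d ∈ A with max_{i∈N_d} δ(i, y_d) ≤ α · max_{i∈N_d} δ(i, j) for all j ∈ A, and the final winner w equals y_{d'} for some district d'. Then for every o ∈ A, max_{i∈N} δ(i, w) ≤ (2 + α) · max_{i∈N} δ(i, o). -/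
/-- MAX∘MAX distortion of any α-in-arbitrary-over mechanism is at most 2+α. -/
theorem max_max_alpha_in_arbitrary_over
    {X : Type*} [MetricSpace X] {ι : Type*}
    {κ : Type*} [Fintype κ] [Nonempty κ]
    (D : κ → Finset ι) (hD : ∀ d, (D d).Nonempty)
    (p : ι → X) (A : Finset X)
    (y : κ → X) (hyA : ∀ d, y d ∈ A) (α : ℝ)
    (hin : ∀ d, ∀ j ∈ A,
      (D d).sup' (hD d) (fun i => dist (p i) (y d)) ≤
        α * (D d).sup' (hD d) (fun i => dist (p i) j))
    (w : X) (d' : κ) (hw : w = y d')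
    (o : X) (ho : o ∈ A) :
    Finset.univ.sup' Finset.univ_nonempty
        (fun d => (D d).sup' (hD d) (fun i => dist (p i) w)) ≤
      (2 + α) * Finset.univ.sup' Finset.univ_nonempty
        (fun d => (D d).sup' (hD d) (fun i => dist (p i) o)) := by
  set M : ℝ := Finset.univ.sup' Finset.univ_nonempty
      (fun d => (D d).sup' (hD d) (fun i => dist (p i) o)) with hM
  -- district-wise sup bounds
  have hMd : ∀ d, (D d).sup' (hD d) (fun i => dist (p i) o) ≤ M := fun d =>
    Finset.le_sup' (fun d => (D d).sup' (hD d) (fun i => dist (p i) o)) (Finset.mem_univ d)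
  have hMdnn : ∀ d, 0 ≤ (D d).sup' (hD d) (fun i => dist (p i) o) := fun d => by
    obtain ⟨i, hi⟩ := hD d
    exact le_trans dist_nonneg (Finset.le_sup' (fun i => dist (p i) o) hi)
  have hMnn : 0 ≤ M := le_trans (hMdnn (Classical.arbitrary κ)) (hMd _)
  have hsnn : ∀ d, 0 ≤ (D d).sup' (hD d) (fun i => dist (p i) (y d)) := fun d => by
    obtain ⟨i, hi⟩ := hD d
    exact le_trans dist_nonneg (Finset.le_sup' (fun i => dist (p i) (y d)) hi)
  obtain ⟨i', hi'⟩ := hD d'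
  set T : ℝ := (D d').sup' (hD d') (fun i => dist (p i) o) with hTdef
  have hs' : (D d').sup' (hD d') (fun i => dist (p i) (y d')) ≤ α * T := hin d' o ho
  -- key: α * T ≤ α * M
  have hkey : α * T ≤ α * M := by
    rcases le_or_gt 0 α with hα | hα
    · exact mul_le_mul_of_nonneg_left (hMd d') hα
    · -- α < 0 forces all district sups at o to be 0
      have hT0 : T = 0 := by
        have h1 : 0 ≤ α * T := le_trans (hsnn d') hs'
        have h2 : 0 ≤ T := hMdnn d'
        nlinarith
      have hM0 : M = 0 := by
        apply le_antisymm _ hMnn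
        apply Finset.sup'_le
        intro d _
        have h1 : 0 ≤ α * ((D d).sup' (hD d) (fun i => dist (p i) o)) :=
          le_trans (hsnn d) (hin d o ho)
        nlinarith [hMdnn d]
      rw [hT0, hM0]
    -- now conclude
  apply Finset.sup'_le
  intro d _
  apply Finset.sup'_le
  intro i hi
  have h1 : dist (p i) o ≤ M := le_trans (Finset.le_sup' (fun i => dist (p i) o) hi) (hMd d)
  have h2 : dist (p i') o ≤ T := Finset.le_sup' (fun i => dist (p i) o) hi'
  have h3 : dist (p i') w ≤ α * T := by
    rw [hw]; exact le_trans (Finset.le_sup' (fun i => dist (p i) (y d')) hi') hs'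
  have htri : dist (p i) w ≤ dist (p i) o + dist o (p i') + dist (p i') w :=
    dist_triangle4 _ _ _ _
  rw [dist_comm o (p i')] at htri
  have hTM : T ≤ M := hMd d'
  nlinarith
end

section
/- Let agents and alternatives be points on the real line with distance δ(x,y) = |x − y|. Partition the agents into k districts, and for each district d pick an arbitrary agent j_d ∈ N_d and let the representative y_d be a closest alternative to j_d. Let w be a median of the multiset {y_1,…,y_k} (i.e., at least k/2 representatives lie on each side of or at w). Then for every alternative o, (1/k)Σ_d max_{i∈N_d} δ(i, w) ≤ 5 · (1/k)Σ_d max_{i∈N_d} δ(i, o). -/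
lemma arbitrary_median_key {k : ℕ} (F : Finset (Fin k)) (Mo : Fin k → ℝ)
    (hnn : ∀ d, 0 ≤ Mo d) (c : ℝ) (hc : 0 ≤ c)
    (hF : ∀ d ∈ F, c ≤ 2 * Mo d) (hcard : (k : ℝ) ≤ 2 * F.card) :
    (k : ℝ) * c ≤ 4 * ∑ d, Mo d := by
  have h1 : (F.card : ℝ) * c ≤ 2 * ∑ d, Mo d := by
    calc (F.card : ℝ) * c = ∑ _d ∈ F, c := by rw [Finset.sum_const, nsmul_eq_mul]
    _ ≤ ∑ d ∈ F, 2 * Mo d := Finset.sum_le_sum hF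
    _ ≤ ∑ d, 2 * Mo d := by
        refine Finset.sum_le_sum_of_subset_of_nonneg (Finset.subset_univ F) ?_
        intro d _ _; linarith [hnn d]
    _ = 2 * ∑ d, Mo d := (Finset.mul_sum _ _ _).symm
  nlinarith [mul_le_mul_of_nonneg_right hcard hc, h1]

/-- Arbitrary-Median on the line has AVG∘MAX distortion at most 5. -/
theorem arbitrary_median
    {ι : Type*} (k : ℕ) (hk : 0 < k)
    (D : Fin k → Finset ι) (hD : ∀ d, (D d).Nonempty)
    (p : ι → ℝ) (A : Finset ℝ)
    (jd : Fin k → ι) (hjd : ∀ d, jd d ∈ D d)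
    (y : Fin k → ℝ) (hyA : ∀ d, y d ∈ A)
    (hfav : ∀ d, ∀ a ∈ A, |p (jd d) - y d| ≤ |p (jd d) - a|)
    (w : ℝ) (hwy : ∃ d₀, w = y d₀)
    (hmedL : (k : ℝ) ≤ 2 * (Finset.univ.filter (fun d => y d ≤ w)).card)
    (hmedR : (k : ℝ) ≤ 2 * (Finset.univ.filter (fun d => w ≤ y d)).card)
    (o : ℝ) (ho : o ∈ A) :
    (1 / (k : ℝ)) * ∑ d : Fin k, (D d).sup' (hD d) (fun i => |p i - w|) ≤
      5 * ((1 / (k : ℝ)) * ∑ d : Fin k, (D d).sup' (hD d) (fun i => |p i - o|)) := by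
  have hkpos : (0 : ℝ) < k := by exact_mod_cast hk
  set Mo : Fin k → ℝ := fun d => (D d).sup' (hD d) (fun i => |p i - o|) with hMo
  have hMoNonneg : ∀ d, 0 ≤ Mo d := fun d =>
    le_trans (abs_nonneg (p (jd d) - o)) (Finset.le_sup' (fun i => |p i - o|) (hjd d))
  -- per-district: |y d - o| ≤ 2 * Mo d
  have h2 : ∀ d, |y d - o| ≤ 2 * Mo d := by
    intro d
    have hle : |p (jd d) - o| ≤ Mo d := Finset.le_sup' (fun i => |p i - o|) (hjd d)
    have hf := hfav d o ho
    calc |y d - o| ≤ |y d - p (jd d)| + |p (jd d) - o| := abs_sub_le _ _ _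
    _ = |p (jd d) - y d| + |p (jd d) - o| := by rw [abs_sub_comm]
    _ ≤ 2 * Mo d := by linarith
  -- key: k * |o - w| ≤ 4 * ∑ Mo
  have hkey : (k : ℝ) * |o - w| ≤ 4 * ∑ d, Mo d := by
    rcases le_total w o with hwo | how
    · refine arbitrary_median_key (Finset.univ.filter (fun d => y d ≤ w)) Mo hMoNonneg
        _ (abs_nonneg _) ?_ hmedL
      intro d hd
      rw [Finset.mem_filter] at hd
      have := h2 d
      have habs : |y d - o| = o - y d := by
        rw [abs_sub_comm, abs_of_nonneg]; · ring_nf; linarith [hd.2]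
      rw [abs_of_nonneg (by linarith : (0:ℝ) ≤ o - w)]
      linarith [hd.2, habs ▸ this]
    · refine arbitrary_median_key (Finset.univ.filter (fun d => w ≤ y d)) Mo hMoNonneg
        _ (abs_nonneg _) ?_ hmedR
      intro d hd
      rw [Finset.mem_filter] at hd
      have := h2 d
      have habs : |y d - o| = y d - o := by
        rw [abs_of_nonneg]; linarith [hd.2]
      rw [abs_of_nonpos (by linarith : o - w ≤ 0)]
      linarith [hd.2, habs ▸ this]
  -- per-district: Mw d ≤ Mo d + |o - w|
  have h1 : ∀ d, (D d).sup' (hD d) (fun i => |p i - w|) ≤ Mo d + |o - w| := by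
    intro d
    apply Finset.sup'_le
    intro i hi
    have hle : |p i - o| ≤ Mo d := Finset.le_sup' (fun i => |p i - o|) hi
    calc |p i - w| ≤ |p i - o| + |o - w| := abs_sub_le _ _ _
    _ ≤ Mo d + |o - w| := by linarith
  have hsum : ∑ d : Fin k, (D d).sup' (hD d) (fun i => |p i - w|) ≤
      5 * ∑ d, Mo d := by
    calc ∑ d : Fin k, (D d).sup' (hD d) (fun i => |p i - w|)
        ≤ ∑ d : Fin k, (Mo d + |o - w|) := Finset.sum_le_sum (fun d _ => h1 d)
    _ = (∑ d, Mo d) + (k : ℝ) * |o - w| := by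
        rw [Finset.sum_add_distrib, Finset.sum_const, nsmul_eq_mul, Finset.card_univ,
          Fintype.card_fin]
    _ ≤ 5 * ∑ d, Mo d := by linarith
  have hinv : (0 : ℝ) ≤ 1 / (k : ℝ) := by positivity
  calc (1 / (k : ℝ)) * ∑ d : Fin k, (D d).sup' (hD d) (fun i => |p i - w|)
      ≤ (1 / (k : ℝ)) * (5 * ∑ d, Mo d) := mul_le_mul_of_nonneg_left hsum hinv
  _ = 5 * ((1 / (k : ℝ)) * ∑ d, Mo d) := by ring
end

section
/- Let agents and alternatives be points on the real line with δ(x,y) = |x − y|, with at least one alternative. Let i* be an arbitrary agent and let w be an alternative closest to i* (a nearest alternative). Then for every alternative o, max_{i∈N} δ(i, w) ≤ 3 · max_{i∈N} δ(i, o). -/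
/-- Arbitrary-Dictator on the line has MAX∘MAX distortion at most 3. -/
theorem arbitrary_dictator
    (N A : Finset ℝ) (hN : N.Nonempty) (hA : A.Nonempty)
    (i : ℝ) (hi : i ∈ N) (w : ℝ) (hw : w ∈ A)
    (hfav : ∀ a ∈ A, |i - w| ≤ |i - a|)
    (o : ℝ) (ho : o ∈ A) :
    N.sup' hN (fun x => |x - w|) ≤ 3 * N.sup' hN (fun x => |x - o|) := by
  apply Finset.sup'_le
  intro x hx
  have hx' : |x - o| ≤ N.sup' hN (fun x => |x - o|) := Finset.le_sup' (fun y => |y - o|) hx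
  have hi' : |i - o| ≤ N.sup' hN (fun x => |x - o|) := Finset.le_sup' (fun y => |y - o|) hi
  have h1 : |i - w| ≤ |i - o| := hfav o ho
  have h2 : |x - w| ≤ |x - i| + |i - w| := abs_sub_le x i w
  have h3 : |x - i| ≤ |x - o| + |o - i| := abs_sub_le x o i
  have h4 : |o - i| = |i - o| := abs_sub_comm o i
  linarith
end

section
/- There exist an instance family on the line with two alternatives showing: for any unanimous distributed mechanism M (one that must select alternative a as a district's representative whenever every agent in the district prefers a to all other alternatives, and must select a district representative consistent with unanimity), there is an instance with two districts, each with all agents unanimously preferring a distinct alternative, on which the chosen winner w satisfies max_i δ(i, w) ≥ 3 · min_j max_i δ(i, j). Hence the MAX∘MAX-distortion of any unanimous distributed mechanism is at least 3, even on the line. -/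
/-- Any unanimous distributed mechanism has MAX∘MAX distortion at least 3, even on the line:
for any rule `choice` selecting one of the two district representatives, there is an instance
on the line with two districts, each unanimously preferring a distinct alternative (so the
representatives are forced to be `a` and `b`), on which the winner's max cost is at least
3 times the optimal max cost. -/
theorem unanimous_lower_bound_three
    (choice : ℝ → ℝ → ℝ)
    (hchoice : ∀ r₁ r₂ : ℝ, choice r₁ r₂ = r₁ ∨ choice r₁ r₂ = r₂) :
    ∃ a b x₁ x₂ : ℝ, a ≠ b ∧
      |x₁ - a| ≤ |x₁ - b| ∧ |x₂ - b| ≤ |x₂ - a| ∧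
      3 * min (max |x₁ - a| |x₂ - a|) (max |x₁ - b| |x₂ - b|) ≤
        max |x₁ - choice a b| |x₂ - choice a b| := by
  rcases hchoice 1 3 with h | h
  · refine ⟨1, 3, 2, 4, by norm_num, ?_, ?_, ?_⟩ <;> try rw [h]
    all_goals
      simp [abs_of_nonneg, abs_of_nonpos] <;> norm_num
  · refine ⟨1, 3, 0, 2, by norm_num, ?_, ?_, ?_⟩ <;> try rw [h]
    all_goals
      simp [abs_of_nonneg, abs_of_nonpos] <;> norm_num
end

section
/- Let agents and alternatives be points on the real line, with agents partitioned into districts N_1,…,N_k of sizes n_d. Fix λ ≥ 1. For each district d, call an alternative x λ-acceptable if Σ_{i∈N_d} δ(i,x) ≤ λ · Σ_{i∈N_d} δ(i,j) for every alternative j; let y_d be the rightmost λ-acceptable alternative for d, and let w be the leftmost among y_1,…,y_k. Then for every alternative o, max_d (1/n_d)Σ_{i∈N_d} δ(i,w) ≤ max{2 + 1/λ, λ} · max_d (1/n_d)Σ_{i∈N_d} δ(i,o). -/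
/-!
If the alternative `o` lies left of the output `w`, then `o ≤ w ≤ y_d` for every district, and
convexity of the total distance on the segment `[o, y_d]` bounds district `d`'s cost at `w` by
that at `o` or at the `λ`-acceptable `y_d`, hence by `λ` times that at `o`.

If `o` lies right of `w = y_{d₀}`, then `o` is not `λ`-acceptable for `d₀`, while the minimiser
`j` of `d₀`'s total distance is, so `j ≤ w`. Non-acceptability of `o` gives
`λ · cost(j) < cost(o)`, and the triangle inequality across the agents of `d₀` bounds `o - j`,
hence `o - w`, by `(1 + 1/λ)` times their average distance to `o`. One more triangle inequality
gives the factor `2 + 1/λ` for every district.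
-/

open Finset

section LineDistances

variable {ι : Type*} (s : Finset ι) (p : ι → ℝ)

-- For empty `s` this is `0`, since `1 / 0 = 0` in `ℝ`.
noncomputable def avgDist (x : ℝ) : ℝ := (1 / (s.card : ℝ)) * ∑ i ∈ s, |p i - x|

def IsAcceptable (A : Finset ℝ) (lam x : ℝ) : Prop :=
  ∀ j ∈ A, ∑ i ∈ s, |p i - x| ≤ lam * ∑ i ∈ s, |p i - j|

theorem avgDist_nonneg (x : ℝ) : 0 ≤ avgDist s p x :=
  mul_nonneg (by positivity) (sum_nonneg fun _ _ ↦ abs_nonneg _)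

theorem convexOn_sum_abs_sub : ConvexOn ℝ Set.univ (fun x ↦ ∑ i ∈ s, |p i - x|) := by
  classical
  induction s using Finset.induction_on with
  | empty => simpa using convexOn_const (0 : ℝ) convex_univ
  | insert i s hi ih =>
    simp only [sum_insert hi]
    refine ConvexOn.add ?_ ih
    simpa only [Real.dist_eq, abs_sub_comm] using convexOn_univ_dist (p i)

theorem sum_abs_sub_le_sum_abs_sub_add (x z : ℝ) :
    ∑ i ∈ s, |p i - x| ≤ ∑ i ∈ s, |p i - z| + s.card * |z - x| := by
  calc ∑ i ∈ s, |p i - x| ≤ ∑ i ∈ s, (|p i - z| + |z - x|) :=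
        sum_le_sum fun i _ ↦ abs_sub_le _ _ _
    _ = ∑ i ∈ s, |p i - z| + s.card * |z - x| := by
        rw [sum_add_distrib, sum_const, nsmul_eq_mul]

theorem card_mul_abs_sub_le (x z : ℝ) :
    s.card * |x - z| ≤ ∑ i ∈ s, |p i - x| + ∑ i ∈ s, |p i - z| := by
  calc s.card * |x - z| = ∑ _i ∈ s, |x - z| := by rw [sum_const, nsmul_eq_mul]
    _ ≤ ∑ i ∈ s, (|p i - x| + |p i - z|) :=
        sum_le_sum fun i _ ↦ by simpa only [abs_sub_comm x] using abs_sub_le x (p i) z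
    _ = ∑ i ∈ s, |p i - x| + ∑ i ∈ s, |p i - z| := sum_add_distrib

theorem avgDist_le_avgDist_add (x z : ℝ) : avgDist s p x ≤ avgDist s p z + |z - x| := by
  calc avgDist s p x ≤ (1 / (s.card : ℝ)) * (∑ i ∈ s, |p i - z| + s.card * |z - x|) :=
        mul_le_mul_of_nonneg_left (sum_abs_sub_le_sum_abs_sub_add s p x z) (by positivity)
    _ = avgDist s p z + (s.card / s.card : ℝ) * |z - x| := by unfold avgDist; ring
    _ ≤ avgDist s p z + |z - x| := by
        gcongr
        exact mul_le_of_le_one_left (abs_nonneg _) (div_self_le_one _)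

variable {s p} {A : Finset ℝ} {lam : ℝ}

theorem sum_abs_sub_le_of_mem_Icc (hlam : 1 ≤ lam) {o w y : ℝ}
    (hy : ∑ i ∈ s, |p i - y| ≤ lam * ∑ i ∈ s, |p i - o|) (how : o ≤ w) (hwy : w ≤ y) :
    ∑ i ∈ s, |p i - w| ≤ lam * ∑ i ∈ s, |p i - o| := by
  have hmax := (convexOn_sum_abs_sub s p).le_max_of_mem_Icc (Set.mem_univ o) (Set.mem_univ y)
    ⟨how, hwy⟩
  have ho : ∑ i ∈ s, |p i - o| ≤ lam * ∑ i ∈ s, |p i - o| :=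
    le_mul_of_one_le_left (sum_nonneg fun _ _ ↦ abs_nonneg _) hlam
  exact hmax.trans (max_le ho hy)

theorem isAcceptable_of_forall_le (hlam : 1 ≤ lam) {j : ℝ}
    (hj : ∀ j' ∈ A, ∑ i ∈ s, |p i - j| ≤ ∑ i ∈ s, |p i - j'|) : IsAcceptable s p A lam j :=
  fun j' hj' ↦ (hj j' hj').trans (le_mul_of_one_le_left (sum_nonneg fun _ _ ↦ abs_nonneg _) hlam)

theorem sub_le_mul_avgDist_of_rightmost_lt (hlam : 1 ≤ lam) {o y : ℝ} (ho : o ∈ A)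
    (hy : ∀ x ∈ A, IsAcceptable s p A lam x → x ≤ y) (hyo : y < o) :
    o - y ≤ (1 + 1 / lam) * avgDist s p o := by
  have hlam0 : 0 < lam := zero_lt_one.trans_le hlam
  obtain ⟨j, hjA, hjmin⟩ := exists_min_image A (fun j ↦ ∑ i ∈ s, |p i - j|) ⟨o, ho⟩
  have hjy : j ≤ y := hy j hjA (isAcceptable_of_forall_le hlam hjmin)
  have ho_not : ¬ IsAcceptable s p A lam o := fun h ↦ (hy o ho h).not_gt hyo
  obtain ⟨j', hj'A, hj'⟩ : ∃ j' ∈ A, lam * ∑ i ∈ s, |p i - j'| < ∑ i ∈ s, |p i - o| := by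
    simpa [IsAcceptable] using ho_not
  have hjo : lam * ∑ i ∈ s, |p i - j| < ∑ i ∈ s, |p i - o| :=
    (mul_le_mul_of_nonneg_left (hjmin j' hj'A) hlam0.le).trans_lt hj'
  have hcard : (0 : ℝ) < s.card := by
    have hpos := (mul_nonneg hlam0.le (sum_nonneg fun i _ ↦ abs_nonneg (p i - j))).trans_lt hjo
    exact_mod_cast card_pos.2 (nonempty_of_sum_ne_zero hpos.ne')
  have hj_le : ∑ i ∈ s, |p i - j| ≤ (1 / lam) * ∑ i ∈ s, |p i - o| := by
    rw [one_div, inv_mul_eq_div, le_div_iff₀ hlam0, mul_comm]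
    exact hjo.le
  have hgap := card_mul_abs_sub_le s p o j
  rw [abs_of_nonneg (by linarith)] at hgap
  calc o - y ≤ o - j := by linarith
    _ = (1 / (s.card : ℝ)) * (s.card * (o - j)) := by field_simp
    _ ≤ (1 / (s.card : ℝ)) * ((1 + 1 / lam) * ∑ i ∈ s, |p i - o|) :=
        mul_le_mul_of_nonneg_left (by linarith) (by positivity)
    _ = (1 + 1 / lam) * avgDist s p o := by unfold avgDist; ring

end LineDistances

theorem lambda_ARL_max_avg_general
    {ι : Type*} {κ : Type*} [Fintype κ] [Nonempty κ]
    (D : κ → Finset ι)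
    (p : ι → ℝ) (A : Finset ℝ)
    (lam : ℝ) (hlam : 1 ≤ lam)
    (y : κ → ℝ)
    (hyAcc : ∀ d, y d ∈ A ∧ ∀ j ∈ A,
      ∑ i ∈ D d, |p i - y d| ≤ lam * ∑ i ∈ D d, |p i - j|)
    (hyRight : ∀ d, ∀ x ∈ A,
      (∀ j ∈ A, ∑ i ∈ D d, |p i - x| ≤ lam * ∑ i ∈ D d, |p i - j|) → x ≤ y d)
    (w : ℝ) (hwmem : ∃ d₀, w = y d₀) (hwLeft : ∀ d, w ≤ y d)
    (o : ℝ) (ho : o ∈ A) :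
    Finset.univ.sup' Finset.univ_nonempty
        (fun d => (1 / ((D d).card : ℝ)) * ∑ i ∈ D d, |p i - w|) ≤
      max (2 + 1 / lam) lam *
        Finset.univ.sup' Finset.univ_nonempty
          (fun d => (1 / ((D d).card : ℝ)) * ∑ i ∈ D d, |p i - o|) := by
  obtain ⟨d₀, rfl⟩ := hwmem
  change univ.sup' _ (fun d ↦ avgDist (D d) p (y d₀)) ≤
    max (2 + 1 / lam) lam * univ.sup' _ (fun d ↦ avgDist (D d) p o)
  set opt := univ.sup' univ_nonempty (fun d ↦ avgDist (D d) p o)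
  have hopt (d : κ) : avgDist (D d) p o ≤ opt := le_sup' (fun d ↦ avgDist (D d) p o) (mem_univ d)
  have hopt0 : 0 ≤ opt := (avgDist_nonneg _ _ _).trans (hopt d₀)
  refine sup'_le _ _ fun d _ ↦ ?_
  rcases le_or_gt o (y d₀) with how | hwo
  · calc avgDist (D d) p (y d₀) ≤ lam * avgDist (D d) p o := by
          rw [avgDist, avgDist, mul_left_comm]
          gcongr
          exact sum_abs_sub_le_of_mem_Icc hlam ((hyAcc d).2 o ho) how (hwLeft d)
      _ ≤ max (2 + 1 / lam) lam * opt :=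
          mul_le_mul (le_max_right _ _) (hopt d) (avgDist_nonneg _ _ _) (by positivity)
  · have hgap := sub_le_mul_avgDist_of_rightmost_lt hlam ho (hyRight d₀) hwo
    calc avgDist (D d) p (y d₀) ≤ avgDist (D d) p o + |o - y d₀| := avgDist_le_avgDist_add _ _ _ _
      _ ≤ opt + (1 + 1 / lam) * opt := by
          rw [abs_of_pos (sub_pos.2 hwo)]
          gcongr
          exacts [hopt d, hgap.trans (mul_le_mul_of_nonneg_left (hopt d₀) (by positivity))]
      _ = (2 + 1 / lam) * opt := by ring
      _ ≤ max (2 + 1 / lam) lam * opt := mul_le_mul_of_nonneg_right (le_max_left _ _) hopt0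

/-- λ-ARL on the line has MAX∘AVG distortion at most max {2 + 1/λ, λ}. -/
theorem lambda_ARL_max_avg
    {ι : Type*} {κ : Type*} [Fintype κ] [Nonempty κ]
    (D : κ → Finset ι) (hD : ∀ d, (D d).Nonempty)
    (p : ι → ℝ) (A : Finset ℝ)
    (lam : ℝ) (hlam : 1 ≤ lam)
    (y : κ → ℝ)
    (hyAcc : ∀ d, y d ∈ A ∧ ∀ j ∈ A,
      ∑ i ∈ D d, |p i - y d| ≤ lam * ∑ i ∈ D d, |p i - j|)
    (hyRight : ∀ d, ∀ x ∈ A,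
      (∀ j ∈ A, ∑ i ∈ D d, |p i - x| ≤ lam * ∑ i ∈ D d, |p i - j|) → x ≤ y d)
    (w : ℝ) (hwmem : ∃ d₀, w = y d₀) (hwLeft : ∀ d, w ≤ y d)
    (o : ℝ) (ho : o ∈ A) :
    Finset.univ.sup' Finset.univ_nonempty
        (fun d => (1 / ((D d).card : ℝ)) * ∑ i ∈ D d, |p i - w|) ≤
      max (2 + 1 / lam) lam *
        Finset.univ.sup' Finset.univ_nonempty
          (fun d => (1 / ((D d).card : ℝ)) * ∑ i ∈ D d, |p i - o|) :=
  lambda_ARL_max_avg_general D p A lam hlam y hyAcc hyRight w hwmem hwLeft o ho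
end

section
/- Let agents and alternatives be points on the real line, with agents in districts N_1,…,N_k. Fix λ ≥ 1. For each district d, call alternative x λ-acceptable if max_{i∈N_d} δ(i,x) ≤ λ · max_{i∈N_d} δ(i,j) for every alternative j; let y_d be the rightmost λ-acceptable alternative for d, and let w be the leftmost of y_1,…,y_k. Then for every alternative o, max_{i∈N} δ(i,w) ≤ max{2 + 1/λ, λ} · max_{i∈N} δ(i,o). -/
/-- λ-ARL on the line has MAX∘MAX distortion at most max {2 + 1/λ, λ}. -/
theorem lambda_ARL_max_max
    {ι : Type*} {κ : Type*} [Fintype κ] [Nonempty κ]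
    (D : κ → Finset ι) (hD : ∀ d, (D d).Nonempty)
    (p : ι → ℝ) (A : Finset ℝ)
    (lam : ℝ) (hlam : 1 ≤ lam)
    (y : κ → ℝ)
    (hyAcc : ∀ d, y d ∈ A ∧ ∀ j ∈ A,
      (D d).sup' (hD d) (fun i => |p i - y d|) ≤ lam * (D d).sup' (hD d) (fun i => |p i - j|))
    (hyRight : ∀ d, ∀ x ∈ A,
      (∀ j ∈ A, (D d).sup' (hD d) (fun i => |p i - x|) ≤
        lam * (D d).sup' (hD d) (fun i => |p i - j|)) → x ≤ y d)
    (w : ℝ) (hwmem : ∃ d₀, w = y d₀) (hwLeft : ∀ d, w ≤ y d)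
    (o : ℝ) (ho : o ∈ A) :
    Finset.univ.sup' Finset.univ_nonempty
        (fun d => (D d).sup' (hD d) (fun i => |p i - w|)) ≤
      max (2 + 1 / lam) lam *
        Finset.univ.sup' Finset.univ_nonempty
          (fun d => (D d).sup' (hD d) (fun i => |p i - o|)) := by
  have hlam0 : (0:ℝ) < lam := lt_of_lt_of_le one_pos hlam
  set M := Finset.univ.sup' Finset.univ_nonempty
      (fun d => (D d).sup' (hD d) (fun i => |p i - o|)) with hM
  have hMd : ∀ d, (D d).sup' (hD d) (fun i => |p i - o|) ≤ M :=
    fun d => Finset.le_sup' (fun d => (D d).sup' (hD d) (fun i => |p i - o|)) (Finset.mem_univ d)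
  have hMi : ∀ d, ∀ i ∈ D d, |p i - o| ≤ M :=
    fun d i hi => le_trans (Finset.le_sup' (fun i => |p i - o|) hi) (hMd d)
  have hM0 : 0 ≤ M := by
    obtain ⟨d⟩ := ‹Nonempty κ›
    obtain ⟨i, hi⟩ := hD d
    exact le_trans (abs_nonneg _) (hMi d i hi)
  have hC1 : (1:ℝ) ≤ max (2 + 1/lam) lam := le_max_of_le_right hlam
  -- key: if w < o then o - w ≤ (1+1/lam) * M
  have key : w < o → o - w ≤ (1 + 1/lam) * M := by
    intro hwo
    obtain ⟨d₀, hd₀⟩ := hwmem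
    have hno : ¬ (∀ j ∈ A, (D d₀).sup' (hD d₀) (fun i => |p i - o|) ≤
        lam * (D d₀).sup' (hD d₀) (fun i => |p i - j|)) := by
      intro h
      exact absurd (hyRight d₀ o ho h) (by rw [← hd₀]; exact not_le.mpr hwo)
    push_neg at hno
    obtain ⟨j, hjA, hj⟩ := hno
    have hAne : A.Nonempty := ⟨o, ho⟩
    obtain ⟨j', hj'A, hj'min⟩ := A.exists_min_image
      (fun x => (D d₀).sup' (hD d₀) (fun i => |p i - x|)) hAne
    have hj'acc : ∀ j'' ∈ A, (D d₀).sup' (hD d₀) (fun i => |p i - j'|) ≤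
        lam * (D d₀).sup' (hD d₀) (fun i => |p i - j''|) := by
      intro j'' hj''
      have h0 : 0 ≤ (D d₀).sup' (hD d₀) (fun i => |p i - j''|) := by
        obtain ⟨i, hi⟩ := hD d₀
        exact le_trans (abs_nonneg _) (Finset.le_sup' (fun i => |p i - j''|) hi)
      calc (D d₀).sup' (hD d₀) (fun i => |p i - j'|)
          ≤ (D d₀).sup' (hD d₀) (fun i => |p i - j''|) := hj'min j'' hj''
        _ ≤ lam * (D d₀).sup' (hD d₀) (fun i => |p i - j''|) :=
            le_mul_of_one_le_left h0 hlam
    have hj'w : j' ≤ w := hd₀ ▸ hyRight d₀ j' hj'A hj'acc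
    have hcj' : (D d₀).sup' (hD d₀) (fun i => |p i - j'|) ≤ M / lam := by
      have h1 : lam * (D d₀).sup' (hD d₀) (fun i => |p i - j'|) ≤
          lam * (D d₀).sup' (hD d₀) (fun i => |p i - j|) :=
        mul_le_mul_of_nonneg_left (hj'min j hjA) hlam0.le
      have h2 : lam * (D d₀).sup' (hD d₀) (fun i => |p i - j|) < M :=
        lt_of_lt_of_le hj (hMd d₀)
      rw [le_div_iff₀ hlam0, mul_comm]
      linarith
    obtain ⟨i₀, hi₀⟩ := hD d₀
    have h3 : |p i₀ - o| ≤ M := hMi d₀ i₀ hi₀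
    have h4 : |p i₀ - j'| ≤ M / lam :=
      le_trans (Finset.le_sup' (fun i => |p i - j'|) hi₀) hcj'
    have ha : o - p i₀ ≤ |p i₀ - o| := by rw [abs_sub_comm]; exact le_abs_self _
    have hb : p i₀ - j' ≤ |p i₀ - j'| := le_abs_self _
    have hdiv : (1 + 1/lam) * M = M + M/lam := by field_simp
    linarith
  apply Finset.sup'_le
  intro d _
  apply Finset.sup'_le
  intro i hi
  rcases le_or_gt o w with how | how
  · rcases le_or_gt w (p i) with h | h
    · have h1 : |p i - w| ≤ M := by
        rw [abs_of_nonneg (by linarith)]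
        have h2 := hMi d i hi
        have h3 := le_abs_self (p i - o)
        linarith
      nlinarith
    · have hyd := hwLeft d
      have h1 : |p i - w| ≤ |p i - y d| := by
        rw [abs_of_nonpos (by linarith), abs_of_nonpos (by linarith)]
        linarith
      have h2 : |p i - y d| ≤ lam * (D d).sup' (hD d) (fun i => |p i - o|) :=
        le_trans (Finset.le_sup' (fun i => |p i - y d|) hi) ((hyAcc d).2 o ho)
      have h3 : lam * (D d).sup' (hD d) (fun i => |p i - o|) ≤ lam * M :=
        mul_le_mul_of_nonneg_left (hMd d) hlam0.le
      have h4 : lam * M ≤ max (2+1/lam) lam * M :=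
        mul_le_mul_of_nonneg_right (le_max_right _ _) hM0
      linarith
  · have hk := key how
    have h1 : |p i - w| ≤ |p i - o| + (o - w) := by
      calc |p i - w| = |(p i - o) + (o - w)| := by
            rw [show p i - w = (p i - o) + (o - w) by ring]
        _ ≤ |p i - o| + |o - w| := abs_add_le _ _
        _ = |p i - o| + (o - w) := by rw [abs_of_pos (show (0:ℝ) < o - w by linarith)]
    have h2 : (2 + 1/lam) * M ≤ max (2+1/lam) lam * M :=
      mul_le_mul_of_nonneg_right (le_max_left _ _) hM0
    have h3 := hMi d i hi
    have h4 : M + (1+1/lam)*M = (2+1/lam)*M := by ring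
    linarith
end

section
/- Let (X, δ) be a metric space, R a finite nonempty set of k ≥ 2 points of X (the representatives), and A a set of points of X (the alternatives) with R ⊆ A. Then min_{j∈R} Σ_{i∈R} δ(i, j) ≤ (2(k−1)/k) · min_{j∈A} Σ_{i∈R} δ(i, j). In particular, the best representative has total distance from R at most twice that of the best alternative in A. -/
/-- The best representative in R has total distance from R at most 2(k-1)/k times
that of the best alternative in A ⊇ R. -/
theorem rep_vs_all_median
    {X : Type*} [MetricSpace X]
    (R A : Finset X) (hR : R.Nonempty) (hA : A.Nonempty) (hRA : R ⊆ A)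
    (hk : 2 ≤ R.card) :
    R.inf' hR (fun j => ∑ i ∈ R, dist i j) ≤
      (2 * ((R.card : ℝ) - 1) / (R.card : ℝ)) * A.inf' hA (fun j => ∑ i ∈ R, dist i j) := by
  classical
  obtain ⟨a, ha, haeq⟩ := A.exists_mem_eq_inf' hA (fun j => ∑ i ∈ R, dist i j)
  set k : ℝ := (R.card : ℝ) with hkdef
  have hk2 : (2:ℝ) ≤ k := by rw [hkdef]; exact_mod_cast hk
  have hkpos : (0:ℝ) < k := by linarith
  set m : ℝ := ∑ i ∈ R, dist i a with hm
  have hm0 : 0 ≤ m := Finset.sum_nonneg fun i _ => dist_nonneg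
  have key : ∀ j ∈ R, (∑ i ∈ R, dist i j) ≤ m + (k - 2) * dist j a := by
    intro j hj
    have h1 : ∑ i ∈ R, dist i j = ∑ i ∈ R.erase j, dist i j :=
      (Finset.sum_erase (f := fun i => dist i j) R (dist_self j)).symm
    have h2 : ∑ i ∈ R.erase j, dist i j ≤
        ∑ i ∈ R.erase j, (dist i a + dist a j) :=
      Finset.sum_le_sum fun i _ => dist_triangle i a j
    have h3 : ∑ i ∈ R.erase j, (dist i a + dist a j)
        = (∑ i ∈ R.erase j, dist i a) + ((R.erase j).card : ℝ) * dist a j := by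
      rw [Finset.sum_add_distrib, Finset.sum_const, nsmul_eq_mul]
    have h4 : ∑ i ∈ R.erase j, dist i a = m - dist j a :=
      Finset.sum_erase_eq_sub hj
    have h5 : ((R.erase j).card : ℝ) = k - 1 := by
      rw [Finset.card_erase_of_mem hj]
      have : 1 ≤ R.card := le_trans (by norm_num) hk
      push_cast [this]; ring
    rw [h1]
    calc ∑ i ∈ R.erase j, dist i j
        ≤ (m - dist j a) + (k - 1) * dist a j := by
          rw [← h4, ← h5]; exact le_trans h2 (le_of_eq h3)
      _ = m + (k - 2) * dist j a := by rw [dist_comm a j]; ring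
  have sumdist : ∑ j ∈ R, dist j a = m := by
    rw [hm]
  have sumkey : ∑ j ∈ R, (∑ i ∈ R, dist i j) ≤ k * m + (k - 2) * m := by
    calc ∑ j ∈ R, (∑ i ∈ R, dist i j)
        ≤ ∑ j ∈ R, (m + (k - 2) * dist j a) := Finset.sum_le_sum key
      _ = k * m + (k - 2) * m := by
          rw [Finset.sum_add_distrib, Finset.sum_const, nsmul_eq_mul,
            ← Finset.mul_sum, sumdist]
  have hinf : k * R.inf' hR (fun j => ∑ i ∈ R, dist i j)
      ≤ ∑ j ∈ R, (∑ i ∈ R, dist i j) := by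
    have := Finset.card_nsmul_le_sum R (fun j => ∑ i ∈ R, dist i j)
      (R.inf' hR (fun j => ∑ i ∈ R, dist i j))
      (fun j hj => Finset.inf'_le _ hj)
    simpa [nsmul_eq_mul, hkdef] using this
  rw [← haeq] at *
  rw [div_mul_eq_mul_div, le_div_iff₀ hkpos]
  nlinarith [hinf, sumkey]
end

section
/- In the representative-selecting setting: if an over-districts voting rule restricted to choosing from the set R of representatives has AVG-distortion at most γ with respect to alternatives in R (i.e., Σ_{i∈R} δ(i,w) ≤ γ Σ_{i∈R} δ(i,j) for all j∈R), then for all alternatives j ∈ A (possibly outside R) with |R| = k ≥ 2, Σ_{i∈R} δ(i,w) ≤ 2γ · Σ_{i∈R} δ(i,j). -/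
/-- If an over-districts rule has AVG-distortion at most γ with respect to the
representatives R, then its winner is within factor 2γ of every alternative in A ⊇ R. -/
theorem rep_selecting_over_rule
    {X : Type*} [MetricSpace X]
    (R A : Finset X) (hRA : R ⊆ A) (hk : 2 ≤ R.card)
    (w : X) (hw : w ∈ R) (γ : ℝ) (hγ : 1 ≤ γ)
    (hdist : ∀ j ∈ R, ∑ i ∈ R, dist i w ≤ γ * ∑ i ∈ R, dist i j) :
    ∀ j ∈ A, ∑ i ∈ R, dist i w ≤ 2 * γ * ∑ i ∈ R, dist i j := by
  intro j hj
  set W := ∑ i ∈ R, dist i w with hW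
  set S := ∑ i ∈ R, dist i j with hS
  have hγ0 : (0:ℝ) ≤ γ := le_trans zero_le_one hγ
  have hkpos : (0:ℝ) < R.card := by
    have : 0 < R.card := by omega
    exact_mod_cast this
  have key : ∀ r ∈ R, W ≤ γ * (S + R.card * dist j r) := by
    intro r hr
    have h1 : W ≤ γ * ∑ i ∈ R, dist i r := hdist r hr
    have h2 : ∑ i ∈ R, dist i r ≤ S + R.card * dist j r := by
      have : ∑ i ∈ R, dist i r ≤ ∑ i ∈ R, (dist i j + dist j r) :=
        Finset.sum_le_sum fun i _ => dist_triangle i j r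
      simpa [Finset.sum_add_distrib, hS, mul_comm] using this
    exact h1.trans (by nlinarith)
  have hsum : (R.card : ℝ) * W ≤ γ * ((R.card : ℝ) * S + (R.card : ℝ) * S) := by
    have := Finset.sum_le_sum key
    have hjr : ∑ r ∈ R, dist j r = S := by
      simp [hS, dist_comm]
    simp only [Finset.sum_const, nsmul_eq_mul] at this
    calc (R.card : ℝ) * W ≤ ∑ r ∈ R, γ * (S + R.card * dist j r) := this
      _ = γ * ((R.card : ℝ) * S + (R.card : ℝ) * S) := by
          rw [← Finset.mul_sum, Finset.sum_add_distrib, ← Finset.mul_sum, hjr]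
          simp only [Finset.sum_const, nsmul_eq_mul]
          try ring
  nlinarith [hsum, hkpos]
end

section
/- On the line, let g_d be monotone, subadditive, consistent, and single-peaked functions defining district costs (g applied to the vector of distances of district members to an alternative, with a unique minimizing alternative location and monotone increase away from it). Fix λ ≥ 1; for each district let y_d be the rightmost alternative x with g_d(vec δ_d(x)) ≤ λ · min_j g_d(vec δ_d(j)), and let w be the leftmost of the y_d. Then for every alternative o, max_d g_d(vec δ_d(w)) ≤ max{2 + 1/λ, λ} · max_d g_d(vec δ_d(o)). -/
/-- Generalized λ-ARL on the line: for monotone, subadditive, consistent,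
single-peaked district cost functions g_d, the distortion for MAX∘G is at most
max {2 + 1/λ, λ}. -/
theorem lambda_ARL_general
    {κ : Type*} [Fintype κ] [Nonempty κ]
    (n : κ → ℕ)
    (g : ∀ d : κ, (Fin (n d) → ℝ) → ℝ)
    (hgmono : ∀ d, ∀ u v : Fin (n d) → ℝ, (∀ i, u i ≤ v i) → g d u ≤ g d v)
    (hgsub : ∀ d, ∀ u v : Fin (n d) → ℝ, g d (u + v) ≤ g d u + g d v)
    (hgcons : ∀ d, ∀ c : ℝ, g d (fun _ => c) = c)
    (p : ∀ d : κ, Fin (n d) → ℝ) (A : Finset ℝ)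
    (hpeak : ∀ d, ∃ t : ℝ, ∀ x z : ℝ,
      ((z ≤ x ∧ x ≤ t) → g d (fun i => |p d i - x|) ≤ g d (fun i => |p d i - z|)) ∧
      ((t ≤ x ∧ x ≤ z) → g d (fun i => |p d i - x|) ≤ g d (fun i => |p d i - z|)))
    (lam : ℝ) (hlam : 1 ≤ lam)
    (y : κ → ℝ)
    (hyAcc : ∀ d, y d ∈ A ∧ ∀ j ∈ A,
      g d (fun i => |p d i - y d|) ≤ lam * g d (fun i => |p d i - j|))
    (hyRight : ∀ d, ∀ x ∈ A,
      (∀ j ∈ A, g d (fun i => |p d i - x|) ≤ lam * g d (fun i => |p d i - j|)) → x ≤ y d)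
    (w : ℝ) (hwmem : ∃ d₀, w = y d₀) (hwLeft : ∀ d, w ≤ y d)
    (o : ℝ) (ho : o ∈ A) :
    Finset.univ.sup' Finset.univ_nonempty (fun d => g d (fun i => |p d i - w|)) ≤
      max (2 + 1 / lam) lam *
        Finset.univ.sup' Finset.univ_nonempty (fun d => g d (fun i => |p d i - o|)) := by
  classical
  set G : κ → ℝ → ℝ := fun d x => g d (fun i => |p d i - x|) with hG
  -- nonnegativity
  have hGnn : ∀ d x, 0 ≤ G d x := by
    intro d x
    have h0 : g d (fun _ => (0:ℝ)) = 0 := hgcons d 0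
    have := hgmono d (fun _ => (0:ℝ)) (fun i => |p d i - x|) (fun i => abs_nonneg _)
    simpa [hG, h0] using this
  -- Lipschitz
  have hLip : ∀ d x z, G d x ≤ G d z + |x - z| := by
    intro d x z
    have h1 : g d (fun i => |p d i - x|) ≤
        g d ((fun i => |p d i - z|) + (fun _ => |x - z|)) := by
      apply hgmono
      intro i
      have : |p d i - x| ≤ |p d i - z| + |z - x| := abs_sub_le _ _ _
      simpa [Pi.add_apply, abs_sub_comm z x] using this
    have h2 := hgsub d (fun i => |p d i - z|) (fun _ => |x - z|)
    have h3 : g d (fun _ => |x - z|) = |x - z| := hgcons d _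
    calc G d x ≤ g d ((fun i => |p d i - z|) + (fun _ => |x - z|)) := h1
      _ ≤ g d (fun i => |p d i - z|) + g d (fun _ => |x - z|) := h2
      _ = G d z + |x - z| := by rw [h3]
  -- reverse triangle-type bound
  have hRev : ∀ d x z, |x - z| ≤ G d x + G d z := by
    intro d x z
    have h1 : g d (fun _ => |x - z|) ≤
        g d ((fun i => |p d i - x|) + (fun i => |p d i - z|)) := by
      apply hgmono
      intro i
      have : |x - z| ≤ |x - p d i| + |p d i - z| := abs_sub_le _ _ _
      simpa [Pi.add_apply, abs_sub_comm x (p d i)] using this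
    have h2 := hgsub d (fun i => |p d i - x|) (fun i => |p d i - z|)
    have h3 : g d (fun _ => |x - z|) = |x - z| := hgcons d _
    calc |x - z| = g d (fun _ => |x - z|) := h3.symm
      _ ≤ g d ((fun i => |p d i - x|) + (fun i => |p d i - z|)) := h1
      _ ≤ G d x + G d z := h2
  obtain ⟨d₀, hd₀⟩ := hwmem
  set OPT : ℝ := Finset.univ.sup' Finset.univ_nonempty (fun d => G d o) with hOPT
  have hOPTle : ∀ d, G d o ≤ OPT := fun d =>
    Finset.le_sup' (fun d => G d o) (Finset.mem_univ d)
  have hOPTnn : 0 ≤ OPT := le_trans (hGnn d₀ o) (hOPTle d₀)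
  have hlam0 : (0:ℝ) < lam := lt_of_lt_of_le one_pos hlam
  have hMax1 : (1:ℝ) ≤ max (2 + 1 / lam) lam := le_trans hlam (le_max_right _ _)
  have hMaxnn : (0:ℝ) ≤ max (2 + 1 / lam) lam := le_trans zero_le_one hMax1
  apply Finset.sup'_le
  intro d _
  show G d w ≤ max (2 + 1 / lam) lam * OPT
  rcases le_or_gt o w with how | how
  · -- o ≤ w : use single-peakedness of d
    obtain ⟨t, ht⟩ := hpeak d
    rcases le_or_gt w t with hwt | hwt
    · have h1 : G d w ≤ G d o := (ht w o).1 ⟨how, hwt⟩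
      calc G d w ≤ G d o := h1
        _ ≤ OPT := hOPTle d
        _ = 1 * OPT := (one_mul _).symm
        _ ≤ max (2 + 1 / lam) lam * OPT := mul_le_mul_of_nonneg_right hMax1 hOPTnn
    · have h1 : G d w ≤ G d (y d) := (ht w (y d)).2 ⟨le_of_lt hwt, hwLeft d⟩
      have h2 : G d (y d) ≤ lam * G d o := (hyAcc d).2 o ho
      calc G d w ≤ lam * G d o := le_trans h1 h2
        _ ≤ lam * OPT := mul_le_mul_of_nonneg_left (hOPTle d) (le_of_lt hlam0)
        _ ≤ max (2 + 1 / lam) lam * OPT :=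
          mul_le_mul_of_nonneg_right (le_max_right _ _) hOPTnn
  · -- w < o
    -- minimizer of G d₀ over A
    obtain ⟨m, hmA, hmmin⟩ := A.exists_min_image (fun j => G d₀ j) ⟨o, ho⟩
    have hmacc : ∀ j ∈ A, G d₀ m ≤ lam * G d₀ j := by
      intro j hj
      have h1 : G d₀ m ≤ G d₀ j := hmmin j hj
      have h2 : G d₀ j ≤ lam * G d₀ j := le_mul_of_one_le_left (hGnn d₀ j) hlam
      exact le_trans h1 h2
    have hmw : m ≤ w := hd₀ ▸ hyRight d₀ m hmA hmacc
    -- o is not acceptable for d₀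
    have honotacc : ¬ ∀ j ∈ A, G d₀ o ≤ lam * G d₀ j := by
      intro hacc
      have := hyRight d₀ o ho hacc
      rw [← hd₀] at this
      exact absurd this (not_le.mpr how)
    push_neg at honotacc
    obtain ⟨j, hjA, hj⟩ := honotacc
    have hmo : lam * G d₀ m < G d₀ o :=
      lt_of_le_of_lt (mul_le_mul_of_nonneg_left (hmmin j hjA) (le_of_lt hlam0)) hj
    have hGm : G d₀ m ≤ (1 / lam) * G d₀ o := by
      rw [div_mul_eq_mul_div, one_mul, le_div_iff₀ hlam0, mul_comm]
      exact le_of_lt hmo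
    have hom : o - m ≤ G d₀ o + G d₀ m := by
      have := hRev d₀ o m
      have habs : o - m ≤ |o - m| := le_abs_self _
      linarith
    have hchain : G d w ≤ G d o + (o - w) := by
      have := hLip d w o
      have habs : |w - o| = o - w := by
        rw [abs_sub_comm]; exact abs_of_pos (by linarith)
      linarith
    have hlaminv : (0:ℝ) ≤ 1 / lam := le_of_lt (by positivity)
    have hGmOPT : (1 / lam) * G d₀ o ≤ (1 / lam) * OPT :=
      mul_le_mul_of_nonneg_left (hOPTle d₀) hlaminv
    have : G d w ≤ (2 + 1 / lam) * OPT := by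
      have h1 := hOPTle d
      have h2 := hOPTle d₀
      nlinarith [hGnn d w, hGnn d₀ m]
    calc G d w ≤ (2 + 1 / lam) * OPT := this
      _ ≤ max (2 + 1 / lam) lam * OPT :=
        mul_le_mul_of_nonneg_right (le_max_left _ _) hOPTnn
end

section
/- Consider the line metric with alternatives a at 0 and b at 2, and single-agent districts. For any deterministic distributed mechanism M that (i) when given the single-district instance with one agent at 2−√2 outputs a (else distortion ≥ 1+√2), (ii) when given the single-district instance with one agent at 2+√2 outputs b (else distortion ≥ 1+√2), and (iii) on the two-district instance with agents at 2−√2 and 2+√2 (representatives a and b respectively) outputs some fixed one of the representatives: the resulting winner on the two-district instance has MAX∘MAX cost at least (1+√2) times the optimum. Hence every distributed mechanism has (MAX∘G)-distortion at least 1+√2 on the line, for G ∈ {AVG, MAX}. -/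
/-- Lower bound of 1+√2 for cardinal distributed mechanisms on the line:
alternatives at 0 and 2; for any over-districts choice W that selects one of the two
representatives 0 and 2, there are two single-agent districts x₁ (whose representative is
forced to be 0, else the single-district distortion is already ≥ 1+√2) and x₂ (whose
representative is forced to be 2) on which the winner W 0 2 has MAX∘MAX cost at least
(1+√2) times the optimal cost. -/
theorem cardinal_lower_bound_one_plus_sqrt_two
    (W : ℝ → ℝ → ℝ) (hW : W 0 2 = 0 ∨ W 0 2 = 2) :
    ∃ x₁ x₂ : ℝ,
      (1 + Real.sqrt 2) * |x₁ - 0| ≤ |x₁ - 2| ∧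
      (1 + Real.sqrt 2) * |x₂ - 2| ≤ |x₂ - 0| ∧
      (1 + Real.sqrt 2) * min (max |x₁ - 0| |x₂ - 0|) (max |x₁ - 2| |x₂ - 2|) ≤
        max |x₁ - W 0 2| |x₂ - W 0 2| := by
  have hs : Real.sqrt 2 ^ 2 = 2 := Real.sq_sqrt (by norm_num)
  have h1 : (1:ℝ) ≤ Real.sqrt 2 := by nlinarith [Real.sqrt_nonneg 2]
  have h2 : Real.sqrt 2 ≤ 2 := by nlinarith [Real.sqrt_nonneg 2]
  set s := Real.sqrt 2 with hsdef
  rcases hW with h | h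
  · refine ⟨2 - s, 2 + s, ?_, ?_, ?_⟩
    · have e1 : |2 - s - (0:ℝ)| = 2 - s := by rw [abs_of_nonneg (by linarith : (0:ℝ) ≤ _)]; ring
      have e2 : |2 - s - (2:ℝ)| = s := by
        rw [abs_of_nonpos (by linarith)]; ring
      rw [e1, e2]; nlinarith
    · have e1 : |2 + s - (2:ℝ)| = s := by rw [abs_of_nonneg (by linarith : (0:ℝ) ≤ _)]; ring
      have e2 : |2 + s - (0:ℝ)| = 2 + s := by rw [abs_of_nonneg (by linarith : (0:ℝ) ≤ _)]; ring
      rw [e1, e2]; nlinarith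
    · rw [h]
      have e1 : |2 - s - (0:ℝ)| = 2 - s := by rw [abs_of_nonneg (by linarith : (0:ℝ) ≤ _)]; ring
      have e2 : |2 + s - (0:ℝ)| = 2 + s := by rw [abs_of_nonneg (by linarith : (0:ℝ) ≤ _)]; ring
      have e3 : |2 - s - (2:ℝ)| = s := by
        rw [abs_of_nonpos (by linarith)]; ring
      have e4 : |2 + s - (2:ℝ)| = s := by rw [abs_of_nonneg (by linarith : (0:ℝ) ≤ _)]; ring
      rw [e1, e2, e3, e4, max_eq_right (by linarith : 2 - s ≤ 2 + s),
        max_self, min_eq_right (by linarith)]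
      nlinarith
  · refine ⟨-s, s, ?_, ?_, ?_⟩
    · have e1 : |(-s) - (0:ℝ)| = s := by
        rw [abs_of_nonpos (by linarith)]; ring
      have e2 : |(-s) - (2:ℝ)| = 2 + s := by
        rw [abs_of_nonpos (by linarith)]; ring
      rw [e1, e2]; nlinarith
    · have e1 : |s - (2:ℝ)| = 2 - s := by
        rw [abs_of_nonpos (by linarith)]; ring
      have e2 : |s - (0:ℝ)| = s := by rw [abs_of_nonneg (by linarith : (0:ℝ) ≤ _)]; ring
      rw [e1, e2]; nlinarith
    · rw [h]
      have e1 : |(-s) - (0:ℝ)| = s := by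
        rw [abs_of_nonpos (by linarith)]; ring
      have e2 : |s - (0:ℝ)| = s := by rw [abs_of_nonneg (by linarith : (0:ℝ) ≤ _)]; ring
      have e3 : |(-s) - (2:ℝ)| = 2 + s := by
        rw [abs_of_nonpos (by linarith)]; ring
      have e4 : |s - (2:ℝ)| = 2 - s := by
        rw [abs_of_nonpos (by linarith)]; ring
      rw [e1, e2, e3, e4, max_self, max_eq_left (by linarith : 2 - s ≤ 2 + s),
        min_eq_left (by linarith)]
      nlinarith
end

section
/- Let θ = (√5−1)/2. For the line metric with alternatives a at 0 and b at 1, one district containing θx agents at 0 and (1−θ)x agents at 1/2: the AVG cost of a is (1−θ)/2 and of b is (1+θ)/2, so choosing b gives ratio (1+θ)/(1−θ) = 2+√5. For the two-district instance where district 1 has θx agents at 1/2 and (1−θ)x agents at 1, and district 2 has x agents at 1+θ/2: the MAX∘AVG cost of a is (2+θ)/2 and of b is θ/2, so choosing a gives ratio (2+θ)/θ = 2+√5. -/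
/-- Computations underlying the 2+√5 lower bound for MAX∘AVG, with θ = (√5-1)/2. -/
theorem max_avg_lower_bound_computation (x : ℝ) (hx : 0 < x) :
    let θ := (Real.sqrt 5 - 1) / 2
    (1 / x) * (θ * x * |(0 : ℝ) - 0| + (1 - θ) * x * |(1 / 2 : ℝ) - 0|) = (1 - θ) / 2 ∧
    (1 / x) * (θ * x * |(0 : ℝ) - 1| + (1 - θ) * x * |(1 / 2 : ℝ) - 1|) = (1 + θ) / 2 ∧
    ((1 + θ) / 2) / ((1 - θ) / 2) = 2 + Real.sqrt 5 ∧
    max ((1 / x) * (θ * x * |(1 / 2 : ℝ) - 0| + (1 - θ) * x * |(1 : ℝ) - 0|))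
        ((1 / x) * (x * |(1 + θ / 2 : ℝ) - 0|)) = (2 + θ) / 2 ∧
    max ((1 / x) * (θ * x * |(1 / 2 : ℝ) - 1| + (1 - θ) * x * |(1 : ℝ) - 1|))
        ((1 / x) * (x * |(1 + θ / 2 : ℝ) - 1|)) = θ / 2 ∧
    ((2 + θ) / 2) / (θ / 2) = 2 + Real.sqrt 5 := by
  intro θ
  have hs : Real.sqrt 5 * Real.sqrt 5 = 5 :=
    Real.mul_self_sqrt (by norm_num)
  have h2 : 2 < Real.sqrt 5 := by
    nlinarith [Real.sq_sqrt (by norm_num : (5:ℝ) ≥ 0), Real.sqrt_nonneg 5]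
  have h3 : Real.sqrt 5 < 3 := by
    nlinarith [Real.sqrt_nonneg 5]
  have hθ0 : 0 < θ := by simp only [θ]; linarith
  have hθ1 : θ < 1 := by simp only [θ]; linarith
  have hx' : x ≠ 0 := ne_of_gt hx
  have ha1 : |(0:ℝ) - 0| = 0 := by norm_num
  have ha2 : |(1/2:ℝ) - 0| = 1/2 := by norm_num
  have ha3 : |(0:ℝ) - 1| = 1 := by norm_num
  have ha4 : |(1/2:ℝ) - 1| = 1/2 := by rw [abs_of_nonpos] <;> norm_num
  have ha5 : |(1:ℝ) - 0| = 1 := by norm_num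
  have ha6 : |(1 + θ/2 : ℝ) - 0| = 1 + θ/2 := by
    rw [abs_of_nonneg] <;> linarith
  have ha7 : |(1 + θ/2 : ℝ) - 1| = θ/2 := by
    rw [abs_of_nonneg] <;> linarith
  refine ⟨?_, ?_, ?_, ?_, ?_, ?_⟩
  · rw [ha1, ha2]; field_simp; try ring
  · rw [ha3, ha4]; field_simp; try ring
  · rw [div_eq_iff (by simp only [θ]; intro h; nlinarith : ((1:ℝ) - θ)/2 ≠ 0)]
    simp only [θ]; nlinarith
  · rw [ha2, ha5, ha6]
    have e1 : (1 / x) * (θ * x * (1/2) + (1 - θ) * x * 1) = (2 - θ)/2 := by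
      field_simp; try ring
    have e2 : (1 / x) * (x * (1 + θ/2)) = (2 + θ)/2 := by
      field_simp; try ring
    rw [e1, e2, max_eq_right (by linarith)]
  · rw [ha4, ha7]
    have e1 : (1 / x) * (θ * x * (1/2) + (1 - θ) * x * |(1:ℝ) - 1|) = θ/2 := by
      simp; field_simp; try ring
    have e2 : (1 / x) * (x * (θ/2)) = θ/2 := by
      field_simp
    rw [e1, e2, max_self]
  · rw [div_eq_iff (by simp only [θ]; intro h; nlinarith : (θ:ℝ)/2 ≠ 0)]
    simp only [θ]; nlinarith
end

section
/- On the real line, suppose at least half of k district representatives lie weakly to the left of an alternative w, each such representative being the favorite alternative of some designated agent j_d in its district, and let o be an alternative with w < o. Then (1/k) Σ_d max_{i∈N_d} δ(i, o) ≥ δ(w, o)/4, i.e., δ(w,o) ≤ 4 · (AVG∘MAX cost of o). -/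
/-- Key step of the Arbitrary-Median analysis: if at least half of the representatives
(each the favorite alternative of a designated agent of its district) lie weakly left of
the alternative w, and o is an alternative to the right of w, then the AVG∘MAX cost of o
is at least δ(w,o)/4. -/
theorem median_half_left_bound
    {ι : Type*} (k : ℕ) (hk : 0 < k)
    (D : Fin k → Finset ι) (hD : ∀ d, (D d).Nonempty)
    (p : ι → ℝ) (A : Finset ℝ)
    (jd : Fin k → ι) (hjd : ∀ d, jd d ∈ D d)
    (y : Fin k → ℝ) (hyA : ∀ d, y d ∈ A)
    (hfav : ∀ d, ∀ a ∈ A, |p (jd d) - y d| ≤ |p (jd d) - a|)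
    (w : ℝ) (hw : w ∈ A)
    (hhalf : (k : ℝ) ≤ 2 * (Finset.univ.filter (fun d => y d ≤ w)).card)
    (o : ℝ) (ho : o ∈ A) (hwo : w < o) :
    |w - o| / 4 ≤ (1 / (k : ℝ)) * ∑ d : Fin k, (D d).sup' (hD d) (fun i => |p i - o|) := by
  set S := Finset.univ.filter (fun d => y d ≤ w) with hS
  set F : Fin k → ℝ := fun d => (D d).sup' (hD d) (fun i => |p i - o|) with hF
  have hle : ∀ d, |p (jd d) - o| ≤ F d := by
    intro d
    show |p (jd d) - o| ≤ (D d).sup' (hD d) (fun i => |p i - o|)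
    exact Finset.le_sup' (fun i => |p i - o|) (hjd d)
  have key : ∀ d ∈ S, (o - w) / 2 ≤ F d := by
    intro d hd
    simp only [hS, Finset.mem_filter] at hd
    have hyd : y d ≤ w := hd.2
    have hfav' := hfav d o ho
    have hsq : (p (jd d) - y d) * (p (jd d) - y d) ≤ (p (jd d) - o) * (p (jd d) - o) := by
      have := mul_self_le_mul_self (abs_nonneg (p (jd d) - y d)) hfav'
      rwa [abs_mul_abs_self, abs_mul_abs_self] at this
    have hyo : y d < o := lt_of_le_of_lt hyd hwo
    have h1 : p (jd d) ≤ (y d + o) / 2 := by nlinarith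
    have h2 : (o - w) / 2 ≤ |p (jd d) - o| := by
      have := neg_abs_le (p (jd d) - o)
      linarith
    exact h2.trans (hle d)
  have hnonneg : ∀ d ∈ Finset.univ \ S, (0:ℝ) ≤ F d := by
    intro d _
    exact le_trans (abs_nonneg _) (hle d)
  have hsum : (S.card : ℝ) * ((o - w) / 2) ≤ ∑ d : Fin k, F d := by
    calc (S.card : ℝ) * ((o - w) / 2) = ∑ _d ∈ S, ((o - w) / 2) := by
          rw [Finset.sum_const, nsmul_eq_mul]
      _ ≤ ∑ d ∈ S, F d := Finset.sum_le_sum key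
      _ ≤ ∑ d : Fin k, F d := by
          refine Finset.sum_le_sum_of_subset_of_nonneg (Finset.subset_univ S) ?_
          intro d _ hdS
          exact le_trans (abs_nonneg _) (hle d)
  have hk' : (0:ℝ) < k := by exact_mod_cast hk
  have habs : |w - o| = o - w := by
    rw [abs_of_neg (by linarith)]; ring
  rw [habs, one_div, inv_mul_eq_div, le_div_iff₀ hk']
  nlinarith [hsum, hhalf]
end
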